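/- Let L be an admissible lattice of ℝ², i.e. there exists C > 0 such that |l₁ l₂| ≥ C for all nonzero l = (l₁,l₂) ∈ L. Then there exists a constant D > 0 such that for all sufficiently large t, (1/D)·log t ≤ V(L,t) ≤ D·log t, where V(L,t) = Σ_{l ∈ L, 0 < ‖l‖ ≤ t} 1/(l₁² l₂²). -/

import Mathlib

/-!
Lower bound: by Minkowski's theorem every box `|x₀| ≤ R, |x₁| ≤ d / R` contains a nonzero
lattice point `l`, and then `C ≤ |l₀ l₁| ≤ d`, so `l` contributes at least `1 / d²` to `V(L,t)`.
For `R = ρ^k` with `ρ = 2d / C`, admissibility confines `|l₀|` to the disjoint ranges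
`[ρ^k C / d, ρ^k]`, so these points are distinct, and about `log t / log ρ` of them have norm at
most `t`.

Upper bound: two lattice points with `|Δl₀| |Δl₁| < C` coincide, so a box of area `n C` contains
at most `4n` lattice points. Sorting the points of norm at most `t` by the dyadic sizes
`2^a ≤ |l₀|` and `2^j C ≤ |l₀ l₁|`, class `(a, j)` has at most `16 · 2^j` points, each
contributing at most `(2^j C)⁻²`. The geometric series in `j` leaves `O(1)` per value of `a`, and
`C / t ≤ |l₀| ≤ t` leaves `O(log t)` values of `a`.
-/

open MeasureTheory Filter Real

/-- `V(L,t) = Σ_{l ∈ L, 0 < ‖l‖ ≤ t} 1/(l₁² l₂²)`. -/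
noncomputable def Vsum (L : Submodule ℤ (EuclideanSpace ℝ (Fin 2))) (t : ℝ) : ℝ :=
  ∑' l : {l : EuclideanSpace ℝ (Fin 2) // l ∈ L ∧ 0 < ‖l‖ ∧ ‖l‖ ≤ t},
    1 / ((l.1 0) ^ 2 * (l.1 1) ^ 2)

section OrderedField

variable {K : Type*} [Field K] [LinearOrder K] [IsStrictOrderedRing K]

theorem Int.floor_mem_Ico_of_abs_lt [FloorRing K] {a : K} {n : ℤ} (h : |a| < n) :
    ⌊a⌋ ∈ Finset.Ico (-n) n := by
  rw [abs_lt] at h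
  rw [Finset.mem_Ico, Int.le_floor, Int.floor_lt, Int.cast_neg]
  exact ⟨h.1.le, h.2⟩

theorem abs_sub_lt_of_floor_div_eq [FloorRing K] {a b c : K} (hc : 0 < c)
    (h : ⌊a / c⌋ = ⌊b / c⌋) : |a - b| < c := by
  have := Int.abs_sub_lt_one_of_floor_eq_floor h
  rwa [← sub_div, abs_div, abs_of_pos hc, div_lt_one hc] at this

theorem one_div_sq_mul_sq_le {x y A : K} (hA : 0 < A) (h : A ≤ |x * y|) :
    1 / (x ^ 2 * y ^ 2) ≤ 1 / A ^ 2 := by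
  rw [← mul_pow, ← sq_abs (x * y)]
  exact one_div_le_one_div_of_le (by positivity) (pow_le_pow_left₀ hA.le h 2)

theorem one_div_sq_le_one_div_sq_mul_sq {x y d : K} (h0 : 0 < |x * y|) (h : |x * y| ≤ d) :
    1 / d ^ 2 ≤ 1 / (x ^ 2 * y ^ 2) := by
  rw [← mul_pow, ← sq_abs (x * y)]
  exact one_div_le_one_div_of_le (by positivity) (pow_le_pow_left₀ h0.le h 2)

theorem two_pow_natLog_floor_le [FloorSemiring K] {y : K} (hy : 1 ≤ y) :
    (2 : K) ^ Nat.log 2 ⌊y⌋₊ ≤ y :=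
  calc (2 : K) ^ Nat.log 2 ⌊y⌋₊ ≤ ⌊y⌋₊ := mod_cast Nat.pow_log_le_self 2 (Nat.floor_pos.2 hy).ne'
    _ ≤ y := Nat.floor_le (zero_le_one.trans hy)

theorem lt_two_pow_natLog_floor_succ [FloorSemiring K] (y : K) : y < 2 ^ (Nat.log 2 ⌊y⌋₊ + 1) :=
  calc y < ⌊y⌋₊ + 1 := Nat.lt_floor_add_one y
    _ ≤ 2 ^ (Nat.log 2 ⌊y⌋₊ + 1) := mod_cast Nat.lt_pow_succ_log_self one_lt_two _

theorem strictMono_abs_of_abs_le_pow {x y : ℕ → K} {C d ρ : K} (hC : 0 < C) (hρ : d < C * ρ)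
    (hxy : ∀ k, C ≤ |x k * y k|) (hx : ∀ k, |x k| ≤ ρ ^ k) (hy : ∀ k, |y k| ≤ d / ρ ^ k) :
    StrictMono fun k => |x k| := by
  have hd : 0 < d := by
    simpa using hC.trans_le <| (hxy 0).trans_eq (abs_mul _ _) |>.trans <|
      mul_le_mul (hx 0) (hy 0) (abs_nonneg _) (by simp)
  have hρ0 : 0 < ρ := pos_of_mul_pos_right (hd.trans hρ) hC.le
  refine strictMono_nat_of_lt_succ fun k => lt_of_mul_lt_mul_right ?_ hd.le
  have hy' : |y (k + 1)| * ρ ^ (k + 1) ≤ d := (le_div_iff₀ (by positivity)).1 (hy (k + 1))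
  calc |x k| * d ≤ ρ ^ k * d := by gcongr; exact hx k
    _ < ρ ^ k * (C * ρ) := by gcongr
    _ = C * ρ ^ (k + 1) := by ring
    _ ≤ |x (k + 1) * y (k + 1)| * ρ ^ (k + 1) := by gcongr; exact hxy (k + 1)
    _ = |x (k + 1)| * (|y (k + 1)| * ρ ^ (k + 1)) := by rw [abs_mul, mul_assoc]
    _ ≤ |x (k + 1)| * d := by gcongr

end OrderedField

theorem log_le_two_mul_log_mul_ceil_logb {ρ t : ℝ} (hρ : 1 < ρ) (ht : 4 ≤ t) :
    log t ≤ 2 * log ρ * ⌈logb ρ (t / 2)⌉₊ := by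
  have hceil : log (t / 2) / log ρ ≤ ⌈logb ρ (t / 2)⌉₊ := Nat.le_ceil _
  rw [div_le_iff₀ (log_pos hρ), log_div (by linarith) two_ne_zero] at hceil
  have hlog4 : 2 * log 2 ≤ log t := by
    rw [← log_rpow two_pos]
    exact log_le_log (by positivity) (by norm_num; linarith)
  linarith

theorem Submodule.finite_setOf_mem_norm_le {E : Type*} [NormedAddCommGroup E] [ProperSpace E]
    (L : Submodule ℤ E) [DiscreteTopology L] (t : ℝ) :
    {l | l ∈ L ∧ 0 < ‖l‖ ∧ ‖l‖ ≤ t}.Finite := by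
  have : DiscreteTopology L.toAddSubgroup := ‹DiscreteTopology L›
  refine (Metric.finite_isBounded_inter_isClosed DiscreteTopology.isDiscrete
    (Metric.isBounded_closedBall (x := 0) (r := t))
    (AddSubgroup.isClosed_of_discrete (H := L.toAddSubgroup))).subset ?_
  rintro l ⟨hl, -, hlt⟩
  exact ⟨mem_closedBall_zero_iff.2 hlt, hl⟩

theorem card_Icc_intLog_two_le {r s : ℝ} (hr : 0 < r) (hrs : r ≤ s) :
    ((Finset.Icc (Int.log 2 r) (Int.log 2 s)).card : ℝ) ≤ logb 2 s - logb 2 r + 2 := by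
  have hmono : Int.log 2 r ≤ Int.log 2 s := Int.log_mono_right hr hrs
  rw [Int.card_Icc, ← Int.cast_natCast, Int.toNat_of_nonneg (by omega)]
  have hfloor (x : ℝ) (hx : 0 ≤ x) : ⌊logb 2 x⌋ = Int.log 2 x :=
    mod_cast Real.floor_logb_natCast (b := 2) hx
  rw [← hfloor r hr.le, ← hfloor s (hr.le.trans hrs)]
  push_cast
  linarith [Int.floor_le (logb 2 s), Int.sub_one_lt_floor (logb 2 r)]

theorem ZLattice.exists_ne_zero_mem_abs_le_of_covolume_lt {ι : Type*} [Fintype ι]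
    (L : Submodule ℤ (EuclideanSpace ℝ ι)) [DiscreteTopology L] [IsZLattice ℝ L]
    {r : ι → ℝ} (hr : ∀ i, 0 ≤ r i) (h : ZLattice.covolume L < ∏ i, r i) :
    ∃ l ∈ L, l ≠ 0 ∧ ∀ i, |l i| ≤ r i := by
  let box : Set (EuclideanSpace ℝ ι) := WithLp.ofLp ⁻¹' Set.Icc (-r) r
  let F := ZSpan.fundamentalDomain ((Module.Free.chooseBasis ℤ L).ofZLatticeBasis ℝ L)
  have fund : IsAddFundamentalDomain L.toAddSubgroup F volume :=
    ZLattice.isAddFundamentalDomain _ volume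
  have hF : volume F = ENNReal.ofReal (ZLattice.covolume L) := by
    rw [ZLattice.covolume_eq_measure_fundamentalDomain L volume fund, measureReal_def,
      ENNReal.ofReal_toReal (ZSpan.fundamentalDomain_isBounded _).measure_lt_top.ne]
  have hbox : volume box = ENNReal.ofReal (∏ i, r i) * 2 ^ Fintype.card ι := by
    rw [(PiLp.volume_preserving_ofLp ι).measure_preimage measurableSet_Icc.nullMeasurableSet,
      Real.volume_Icc_pi, ENNReal.ofReal_prod_of_nonneg (fun i _ => hr i), ← Finset.card_univ,
      ← Finset.prod_const, ← Finset.prod_mul_distrib]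
    refine Finset.prod_congr rfl fun i _ => ?_
    rw [Pi.neg_apply, sub_neg_eq_add, ← mul_two, ENNReal.ofReal_mul (hr i), ENNReal.ofReal_ofNat]
  have hlt : volume F * 2 ^ Module.finrank ℝ (EuclideanSpace ℝ ι) < volume box := by
    rw [hF, hbox, finrank_euclideanSpace]
    exact ENNReal.mul_lt_mul_left (by simp) (by simp)
      ((ENNReal.ofReal_lt_ofReal_iff (ZLattice.covolume_pos L volume |>.trans h)).2 h)
  have : Countable L.toAddSubgroup := inferInstanceAs (Countable L)
  obtain ⟨⟨l, hlL⟩, hl0, hlbox⟩ := exists_ne_zero_mem_lattice_of_measure_mul_two_pow_lt_measure fund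
    (s := box) (fun x hx => ⟨neg_le_neg hx.2, neg_le.1 hx.1⟩)
    ((convex_Icc (-r) r).linear_preimage (WithLp.linearEquiv 2 ℝ (ι → ℝ)).toLinearMap) hlt
  exact ⟨l, hlL, by simpa using hl0, fun i => abs_le.2 ⟨hlbox.1 i, hlbox.2 i⟩⟩

local notation "ℝ²" => EuclideanSpace ℝ (Fin 2)

theorem EuclideanSpace.norm_le_abs_add_abs (l : ℝ²) : ‖l‖ ≤ |l 0| + |l 1| := by
  rw [← sq_le_sq₀ (norm_nonneg l) (by positivity), EuclideanSpace.real_norm_sq_eq, Fin.sum_univ_two,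
    ← sq_abs (l 0), ← sq_abs (l 1)]
  nlinarith [abs_nonneg (l 0), abs_nonneg (l 1)]

noncomputable def latticeBall (L : Submodule ℤ ℝ²) [DiscreteTopology L] (t : ℝ) : Finset ℝ² :=
  (L.finite_setOf_mem_norm_le t).toFinset

theorem mem_latticeBall {L : Submodule ℤ ℝ²} [DiscreteTopology L] {t : ℝ} {l : ℝ²} :
    l ∈ latticeBall L t ↔ l ∈ L ∧ 0 < ‖l‖ ∧ ‖l‖ ≤ t :=
  Set.Finite.mem_toFinset _

theorem Vsum_eq_sum (L : Submodule ℤ ℝ²) [DiscreteTopology L] (t : ℝ) :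
    Vsum L t = ∑ l ∈ latticeBall L t, 1 / (l 0 ^ 2 * l 1 ^ 2) := by
  rw [← Finset.tsum_subtype]
  exact (Equiv.subtypeEquivRight fun _ => mem_latticeBall.symm).tsum_eq
    (fun l : latticeBall L t => 1 / (l.1 0 ^ 2 * l.1 1 ^ 2))

theorem Vsum_nonneg (L : Submodule ℤ ℝ²) (t : ℝ) : 0 ≤ Vsum L t :=
  tsum_nonneg fun _ => by positivity

theorem mul_le_Vsum_of_injOn {L : Submodule ℤ ℝ²} [DiscreteTopology L] {t w : ℝ} {K : ℕ}
    {p : ℕ → ℝ²} (hp : Set.InjOn p (Finset.range K)) (hball : ∀ k < K, p k ∈ latticeBall L t)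
    (hw : ∀ k < K, w ≤ 1 / (p k 0 ^ 2 * p k 1 ^ 2)) : K * w ≤ Vsum L t := by
  have hsub : (Finset.range K).image p ⊆ latticeBall L t := fun l hl => by
    obtain ⟨k, hk, rfl⟩ := Finset.mem_image.1 hl
    exact hball k (Finset.mem_range.1 hk)
  calc K * w = ((Finset.range K).image p).card • w := by
        rw [Finset.card_image_of_injOn hp, Finset.card_range, nsmul_eq_mul]
    _ ≤ ∑ l ∈ (Finset.range K).image p, 1 / (l 0 ^ 2 * l 1 ^ 2) :=
        Finset.card_nsmul_le_sum _ _ _ <| Finset.forall_mem_image.2 fun k hk =>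
          hw k (Finset.mem_range.1 hk)
    _ ≤ Vsum L t :=
        Vsum_eq_sum L t ▸ Finset.sum_le_sum_of_subset_of_nonneg hsub fun _ _ _ => by positivity

def IsAdmissibleWith (C : ℝ) (L : Submodule ℤ ℝ²) : Prop :=
  ∀ l ∈ L, l ≠ 0 → C ≤ |l 0 * l 1|

noncomputable def dyadicIndex (C : ℝ) (l : ℝ²) : ℤ × ℕ :=
  (Int.log 2 |l 0|, Nat.log 2 ⌊|l 0 * l 1| / C⌋₊)

theorem mem_Ico_of_dyadicIndex_eq {C : ℝ} (hC : 0 < C) {l : ℝ²} (hl : C ≤ |l 0 * l 1|) {a : ℤ}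
    {j : ℕ} (h : dyadicIndex C l = (a, j)) :
    |l 0| ∈ Set.Ico (2 ^ a) (2 * 2 ^ a) ∧ |l 0 * l 1| ∈ Set.Ico (C * 2 ^ j) (C * (2 * 2 ^ j)) := by
  have ha : Int.log 2 |l 0| = a := congrArg Prod.fst h
  have hj : Nat.log 2 ⌊|l 0 * l 1| / C⌋₊ = j := congrArg Prod.snd h
  subst ha hj
  have hl0 : 0 < |l 0| := abs_pos.2 (left_ne_zero_of_mul (abs_pos.1 (hC.trans_le hl)))
  have hlo := two_pow_natLog_floor_le ((le_div_iff₀ hC).2 (one_mul C ▸ hl))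
  have hhi := lt_two_pow_natLog_floor_succ (|l 0 * l 1| / C)
  rw [le_div_iff₀ hC] at hlo
  rw [div_lt_iff₀ hC, pow_succ] at hhi
  refine ⟨⟨Int.zpow_log_le_self (R := ℝ) one_lt_two hl0, ?_⟩, by linarith, by linarith⟩
  simpa [zpow_add_one₀, mul_comm] using Int.lt_zpow_succ_log_self (R := ℝ) one_lt_two |l 0|

namespace IsAdmissibleWith

variable {C : ℝ} {L : Submodule ℤ ℝ²}

theorem eq_of_abs_sub_mul_abs_sub_lt (hL : IsAdmissibleWith C L) {l l' : ℝ²} (hl : l ∈ L)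
    (hl' : l' ∈ L) (h : |l 0 - l' 0| * |l 1 - l' 1| < C) : l = l' := by
  by_contra hne
  have := hL (l - l') (sub_mem hl hl') (sub_ne_zero.2 hne)
  rw [PiLp.sub_apply, PiLp.sub_apply, abs_mul] at this
  exact this.not_gt h

theorem card_le_of_abs_lt (hL : IsAdmissibleWith C L) (hC : 0 < C) {X : ℝ} (hX : 0 < X) (n : ℕ)
    {s : Finset ℝ²} (hs : ∀ l ∈ s, l ∈ L ∧ |l 0| < X ∧ |l 1| < n * (C / X)) :
    s.card ≤ 4 * n := by
  have hCX : 0 < C / X := div_pos hC hX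
  let cell : ℝ² → ℤ × ℤ := fun l => (⌊l 0 / X⌋, ⌊l 1 / (C / X)⌋)
  have hmaps : ∀ l ∈ s, cell l ∈ Finset.Ico (-1) 1 ×ˢ Finset.Ico (-n : ℤ) n := by
    intro l hl
    obtain ⟨-, h0, h1⟩ := hs l hl
    refine Finset.mem_product.2 ⟨Int.floor_mem_Ico_of_abs_lt ?_, Int.floor_mem_Ico_of_abs_lt ?_⟩
    · rwa [abs_div, abs_of_pos hX, Int.cast_one, div_lt_one hX]
    · rwa [abs_div, abs_of_pos hCX, Int.cast_natCast, div_lt_iff₀ hCX]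
  have hinj : Set.InjOn cell s := fun l hl l' hl' hcell =>
    hL.eq_of_abs_sub_mul_abs_sub_lt (hs l hl).1 (hs l' hl').1 <|
      calc |l 0 - l' 0| * |l 1 - l' 1|
          < X * (C / X) := mul_lt_mul'' (abs_sub_lt_of_floor_div_eq hX (Prod.ext_iff.1 hcell).1)
            (abs_sub_lt_of_floor_div_eq hCX (Prod.ext_iff.1 hcell).2) (abs_nonneg _) (abs_nonneg _)
        _ = C := mul_div_cancel₀ C hX.ne'
  calc s.card ≤ _ := Finset.card_le_card_of_injOn cell hmaps hinj
    _ = 2 * (2 * n) := by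
      rw [Finset.card_product, Int.card_Ico, Int.card_Ico]
      congr 1; omega
    _ = 4 * n := by ring

theorem sum_dyadicIndex_eq_le (hL : IsAdmissibleWith C L) (hC : 0 < C) {s : Finset ℝ²}
    (hs : ∀ l ∈ s, l ∈ L ∧ l ≠ 0) (a : ℤ) (j : ℕ) :
    ∑ l ∈ s with dyadicIndex C l = (a, j), 1 / (l 0 ^ 2 * l 1 ^ 2) ≤ 16 / C ^ 2 * (1 / 2) ^ j := by
  set fiber := s.filter (dyadicIndex C · = (a, j))
  have hbounds : ∀ l ∈ fiber, l ∈ L ∧ |l 0| ∈ Set.Ico (2 ^ a) (2 * 2 ^ a) ∧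
      |l 0 * l 1| ∈ Set.Ico (C * 2 ^ j) (C * (2 * 2 ^ j)) := by
    intro l hl
    obtain ⟨hl, hidx⟩ := Finset.mem_filter.1 hl
    obtain ⟨hlL, hl0⟩ := hs l hl
    exact ⟨hlL, mem_Ico_of_dyadicIndex_eq hC (hL l hlL hl0) hidx⟩
  have hcard : fiber.card ≤ 4 * (4 * 2 ^ j) := by
    refine hL.card_le_of_abs_lt hC (X := 2 * 2 ^ a) (by positivity) _ fun l hl => ?_
    obtain ⟨hlL, ⟨ha, ha'⟩, -, hj⟩ := hbounds l hl
    refine ⟨hlL, ha', ?_⟩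
    have hprod : |l 0| * |l 1| < C * (2 * 2 ^ j) := abs_mul (l 0) (l 1) ▸ hj
    rw [Nat.cast_mul, Nat.cast_pow, Nat.cast_ofNat, mul_div_assoc', lt_div_iff₀ (by positivity)]
    calc |l 1| * (2 * 2 ^ a) ≤ 2 * (|l 0| * |l 1|) := by nlinarith [abs_nonneg (l 1)]
      _ < 2 * (C * (2 * 2 ^ j)) := by gcongr
      _ = 4 * 2 ^ j * C := by ring
  calc ∑ l ∈ fiber, 1 / (l 0 ^ 2 * l 1 ^ 2)
      ≤ fiber.card • (1 / (C * 2 ^ j) ^ 2) :=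
        Finset.sum_le_card_nsmul _ _ _ fun l hl =>
          one_div_sq_mul_sq_le (by positivity) (hbounds l hl).2.2.1
    _ ≤ (4 * (4 * 2 ^ j) : ℕ) • (1 / (C * 2 ^ j) ^ 2) := by gcongr
    _ = 16 / C ^ 2 * (1 / 2) ^ j := by
        rw [nsmul_eq_mul, div_pow, one_pow]; push_cast; field_simp; ring

theorem Vsum_le [DiscreteTopology L] (hL : IsAdmissibleWith C L) (hC : 0 < C) {t : ℝ}
    (ht : 0 < t) (hCt : C ≤ t ^ 2) : Vsum L t ≤ 32 / C ^ 2 * (2 * logb 2 t - logb 2 C + 2) := by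
  set s := latticeBall L t
  set A := Finset.Icc (Int.log 2 (C / t)) (Int.log 2 t)
  set B := s.image fun l => (dyadicIndex C l).2
  have hs : ∀ l ∈ s, l ∈ L ∧ l ≠ 0 := fun l hl =>
    have hl := mem_latticeBall.1 hl
    ⟨hl.1, norm_pos_iff.1 hl.2.1⟩
  have hmaps : ∀ l ∈ s, dyadicIndex C l ∈ A ×ˢ B := by
    intro l hl
    obtain ⟨hlL, -, hlt⟩ := mem_latticeBall.1 hl
    have hprod : C ≤ |l 0| * |l 1| := abs_mul (l 0) (l 1) ▸ hL l hlL (hs l hl).2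
    have h0t : |l 0| ≤ t := (PiLp.norm_apply_le l 0).trans hlt
    have h1t : |l 1| ≤ t := (PiLp.norm_apply_le l 1).trans hlt
    have hCt_le : C / t ≤ |l 0| := (div_le_iff₀ ht).2 (by nlinarith [abs_nonneg (l 0)])
    refine Finset.mem_product.2 ⟨Finset.mem_Icc.2 ⟨Int.log_mono_right (div_pos hC ht) hCt_le,
      Int.log_mono_right ((div_pos hC ht).trans_le hCt_le) h0t⟩, Finset.mem_image_of_mem _ hl⟩
  have hA : (A.card : ℝ) ≤ 2 * logb 2 t - logb 2 C + 2 := by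
    have := card_Icc_intLog_two_le (div_pos hC ht) ((div_le_iff₀ ht).2 (by nlinarith))
    rwa [Real.logb_div hC.ne' ht.ne', sub_sub_eq_add_sub, ← two_mul] at this
  have hB : ∑ j ∈ B, (1 / 2 : ℝ) ^ j ≤ 2 :=
    (summable_geometric_two.sum_le_tsum B fun _ _ => by positivity).trans_eq tsum_geometric_two
  calc Vsum L t = ∑ l ∈ s, 1 / (l 0 ^ 2 * l 1 ^ 2) := Vsum_eq_sum L t
    _ = ∑ p ∈ A ×ˢ B, ∑ l ∈ s with dyadicIndex C l = p, 1 / (l 0 ^ 2 * l 1 ^ 2) :=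
        (Finset.sum_fiberwise_of_maps_to hmaps _).symm
    _ ≤ ∑ p ∈ A ×ˢ B, 16 / C ^ 2 * (1 / 2) ^ p.2 :=
        Finset.sum_le_sum fun p _ => hL.sum_dyadicIndex_eq_le hC hs p.1 p.2
    _ = A.card * (16 / C ^ 2 * ∑ j ∈ B, (1 / 2 : ℝ) ^ j) := by
        simp only [Finset.sum_product, ← Finset.mul_sum, Finset.sum_const, nsmul_eq_mul]
        ring
    _ ≤ (2 * logb 2 t - logb 2 C + 2) * (16 / C ^ 2 * 2) :=
        mul_le_mul hA (by gcongr) (by positivity) ((Nat.cast_nonneg _).trans hA)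
    _ = 32 / C ^ 2 * (2 * logb 2 t - logb 2 C + 2) := by ring

theorem Vsum_isBigO_log [DiscreteTopology L] (hL : IsAdmissibleWith C L) (hC : 0 < C) :
    Vsum L =O[atTop] log := by
  have hlogb : logb 2 =O[atTop] log := isBigO_logb_log.mono le_top
  have hconst : ∀ c : ℝ, (fun _ => c) =O[atTop] log := fun _ => isLittleO_const_log_atTop.isBigO
  refine .trans ?_ (((hlogb.const_mul_left 2).sub (hconst (logb 2 C))).add (hconst 2)
    |>.const_mul_left (32 / C ^ 2))
  refine .of_bound' ?_
  filter_upwards [eventually_ge_atTop (max 1 C)] with t ht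
  have ht1 := (le_max_left _ _).trans ht
  rw [norm_of_nonneg (Vsum_nonneg L t)]
  exact (hL.Vsum_le hC (by linarith) (by nlinarith [(le_max_right 1 C).trans ht])).trans
    (Real.le_norm_self _)

theorem log_le_mul_Vsum [DiscreteTopology L] (hL : IsAdmissibleWith C L) (hC : 0 < C) {d : ℝ}
    (hd : ∀ R > 0, ∃ l ∈ L, l ≠ 0 ∧ |l 0| ≤ R ∧ |l 1| ≤ d / R) {t : ℝ} (ht : 4 ≤ t)
    (htd : 2 * d ≤ t) : log t ≤ 2 * d ^ 2 * log (2 * d / C) * Vsum L t := by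
  have hCd : C ≤ d := by
    obtain ⟨l, hl, hl0, h0, h1⟩ := hd 1 one_pos
    simpa using (hL l hl hl0).trans_eq (abs_mul _ _) |>.trans <|
      mul_le_mul h0 h1 (abs_nonneg _) zero_le_one
  set ρ := 2 * d / C
  have hρ : 1 < ρ := by rw [one_lt_div hC]; linarith
  choose p hpL hp0 hx hy using fun k : ℕ => hd (ρ ^ k) (by positivity)
  have hxy (k : ℕ) : C ≤ |p k 0 * p k 1| := hL _ (hpL k) (hp0 k)
  have hinj : Function.Injective p :=
    (strictMono_abs_of_abs_le_pow hC (by rw [mul_div_cancel₀ _ hC.ne']; linarith) hxy hx hy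
      ).injective.of_comp (f := fun l : ℝ² => |l 0|)
  set K := ⌈logb ρ (t / 2)⌉₊
  have hball : ∀ k < K, p k ∈ latticeBall L t := by
    intro k hk
    have hρk : ρ ^ k < t / 2 := by
      simpa using (Real.lt_logb_iff_rpow_lt hρ (by linarith)).1 (Nat.lt_ceil.1 hk)
    refine mem_latticeBall.2 ⟨hpL k, norm_pos_iff.2 (hp0 k), ?_⟩
    calc ‖p k‖ ≤ |p k 0| + |p k 1| := EuclideanSpace.norm_le_abs_add_abs (p k)
      _ ≤ ρ ^ k + d :=
        add_le_add (hx k) ((hy k).trans (div_le_self (by linarith) (one_le_pow₀ hρ.le)))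
      _ ≤ t := by linarith
  have hweight (k : ℕ) : 1 / d ^ 2 ≤ 1 / (p k 0 ^ 2 * p k 1 ^ 2) := by
    refine one_div_sq_le_one_div_sq_mul_sq (hC.trans_le (hxy k)) ?_
    calc |p k 0 * p k 1| = |p k 0| * |p k 1| := abs_mul _ _
      _ ≤ ρ ^ k * (d / ρ ^ k) := mul_le_mul (hx k) (hy k) (abs_nonneg _) (by positivity)
      _ = d := mul_div_cancel₀ d (by positivity)
  calc log t ≤ 2 * log ρ * K := log_le_two_mul_log_mul_ceil_logb hρ ht
    _ = 2 * d ^ 2 * log ρ * (K * (1 / d ^ 2)) := by field_simp [(hC.trans_le hCd).ne']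
    _ ≤ 2 * d ^ 2 * log ρ * Vsum L t := by
        have := log_pos hρ
        gcongr
        exact mul_le_Vsum_of_injOn hinj.injOn hball fun k _ => hweight k

theorem log_isBigO_Vsum [DiscreteTopology L] [IsZLattice ℝ L] (hL : IsAdmissibleWith C L)
    (hC : 0 < C) : log =O[atTop] Vsum L := by
  set d := 2 * ZLattice.covolume L
  have hd : ∀ R > 0, ∃ l ∈ L, l ≠ 0 ∧ |l 0| ≤ R ∧ |l 1| ≤ d / R := by
    intro R hR
    have hcov := ZLattice.covolume_pos L
    obtain ⟨l, hl, hl0, hle⟩ := ZLattice.exists_ne_zero_mem_abs_le_of_covolume_lt L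
      (r := ![R, d / R]) (Fin.forall_fin_two.2 ⟨hR.le, div_nonneg (by linarith) hR.le⟩)
      (by rw [Fin.prod_univ_two]; simp [mul_div_cancel₀ _ hR.ne', d]; linarith)
    exact ⟨l, hl, hl0, hle 0, hle 1⟩
  refine .of_bound (2 * d ^ 2 * log (2 * d / C)) ?_
  filter_upwards [eventually_ge_atTop 4, eventually_ge_atTop (2 * d)] with t ht htd
  rw [norm_of_nonneg (log_nonneg (by linarith)), norm_of_nonneg (Vsum_nonneg L t)]
  exact hL.log_le_mul_Vsum hC hd ht htd

end IsAdmissibleWith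

/-- If `L` is an admissible lattice of `ℝ²`, then there is `D > 0` with
`(1/D) log t ≤ V(L,t) ≤ D log t` for all large `t`. -/
theorem Vsum_asymp_log (L : Submodule ℤ (EuclideanSpace ℝ (Fin 2)))
    [DiscreteTopology L] [IsZLattice ℝ L]
    (hadm : ∃ C > 0, ∀ l ∈ L, l ≠ 0 → C ≤ |l 0 * l 1|) :
    ∃ D > 0, ∀ᶠ t : ℝ in atTop,
      (1 / D) * Real.log t ≤ Vsum L t ∧ Vsum L t ≤ D * Real.log t := by
  obtain ⟨C, hC, hL⟩ := hadm
  obtain ⟨c₁, hc₁, hlower⟩ := (IsAdmissibleWith.log_isBigO_Vsum hL hC).exists_pos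
  obtain ⟨c₂, -, hupper⟩ := (IsAdmissibleWith.Vsum_isBigO_log hL hC).exists_pos
  have hD : 0 < max c₁ c₂ := lt_max_of_lt_left hc₁
  refine ⟨max c₁ c₂, hD, ?_⟩
  filter_upwards [hlower.bound, hupper.bound, eventually_ge_atTop 1] with t hlower hupper ht
  rw [norm_of_nonneg (log_nonneg ht), norm_of_nonneg (Vsum_nonneg L t)] at hlower hupper
  constructor
  · rw [one_div_mul_eq_div, div_le_iff₀' hD]
    exact hlower.trans (mul_le_mul_of_nonneg_right (le_max_left _ _) (Vsum_nonneg L t))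
  · exact hupper.trans (mul_le_mul_of_nonneg_right (le_max_right _ _) (log_nonneg ht))
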